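/- (Popescu–von Neumann inequality, homogeneous case, Hilbert-space formulation) Let T₁, …, T_k be operators on a Hilbert space H with ‖Σᵢ Tᵢ Tᵢ*‖ ≤ 1, and let p = Σ_{|w|=n} a_w e_w be a homogeneous non-commutative polynomial of degree n in k variables. Assume the operator inequality ‖p(T₁,…,T_k)‖ ≤ ‖p‖_{A(k)} (Popescu's inequality) where ‖p‖_{A(k)} is the left-regular norm on the full Fock space. Then ‖p(T₁,…,T_k)‖ ≤ (Σ_{|w|=n} |a_w|²)^{1/2}. -/

import Mathlib

open ContinuousLinearMap

/-- The ℓ² norm of a finitely supported function on the free monoid. -/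
noncomputable def l2norm {k : ℕ} (p : MonoidAlgebra ℂ (FreeMonoid (Fin k))) : ℝ :=
  Real.sqrt (∑ x ∈ p.coeff.support, ‖p.coeff x‖ ^ 2)

/-- Evaluation of a non-commutative polynomial `p = Σ_w a_w e_w` at the tuple `T`:
`p(T) = Σ_w a_w T_{i₁} ⋯ T_{i_n}` for `w = i₁ ⋯ i_n`. -/
noncomputable def evalAt {k : ℕ} {H : Type*} [NormedAddCommGroup H]
    [InnerProductSpace ℂ H] [CompleteSpace H]
    (p : MonoidAlgebra ℂ (FreeMonoid (Fin k))) (T : Fin k → H →L[ℂ] H) :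
    H →L[ℂ] H :=
  ∑ x ∈ p.coeff.support, p.coeff x • (x.toList.map T).prod

/-
If every word in the support of `p` has length `n`, then a product `u * v` with `u` in the
support of `p` determines `u` and `v`. Hence the coefficients of `p * q` are exactly the products
`p u * q v`, each occurring once, so `‖p * q‖₂ = ‖p‖₂ ‖q‖₂`. The left-regular norm of `p` is
therefore `‖p‖₂`, attained at `q = 1`, and Popescu's inequality gives the bound.
-/

theorem FreeMonoid.mul_inj_of_length_eq {α : Type*} {u v u' v' : FreeMonoid α}
    (h : u * v = u' * v') (hlen : u.length = u'.length) : u = u' ∧ v = v' := by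
  have := congrArg FreeMonoid.toList h
  rw [FreeMonoid.toList_mul, FreeMonoid.toList_mul] at this
  obtain ⟨hu, hv⟩ := List.append_inj this hlen
  exact ⟨FreeMonoid.toList.injective hu, FreeMonoid.toList.injective hv⟩

theorem FreeMonoid.uniqueMul_of_length_eq {α : Type*} {n : ℕ} {A B : Finset (FreeMonoid α)}
    (hA : ∀ x ∈ A, x.length = n) {u : FreeMonoid α} (hu : u.length = n) (v : FreeMonoid α) :
    UniqueMul A B u v := fun _ _ ha _ h ↦
  FreeMonoid.mul_inj_of_length_eq h ((hA _ ha).trans hu.symm)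

theorem FreeMonoid.injOn_mul_product_of_length_eq {α : Type*} {n : ℕ}
    {A B : Finset (FreeMonoid α)} (hA : ∀ x ∈ A, x.length = n) :
    Set.InjOn (fun z : FreeMonoid α × FreeMonoid α ↦ z.1 * z.2) (A ×ˢ B : Finset _) := by
  rintro ⟨u, v⟩ huv ⟨u', v'⟩ huv' h
  simp only [Finset.coe_product, Set.mem_prod, Finset.mem_coe] at huv huv'
  obtain ⟨rfl, rfl⟩ := FreeMonoid.mul_inj_of_length_eq h ((hA u huv.1).trans (hA u' huv'.1).symm)
  rfl

theorem MonoidAlgebra.coeff_mul_mul_of_length_eq {R α : Type*} [Semiring R] {n : ℕ}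
    {p : MonoidAlgebra R (FreeMonoid α)} (hp : ∀ x ∈ p.coeff.support, x.length = n)
    (q : MonoidAlgebra R (FreeMonoid α)) {u : FreeMonoid α} (hu : u.length = n)
    (v : FreeMonoid α) : (p * q).coeff (u * v) = p.coeff u * q.coeff v :=
  coeff_mul_mul_of_uniqueMul (FreeMonoid.uniqueMul_of_length_eq hp hu v)

theorem l2norm_one {k : ℕ} : l2norm (1 : MonoidAlgebra ℂ (FreeMonoid (Fin k))) = 1 := by
  simp [l2norm, ← Finset.singleton_one]

open scoped Pointwise in
theorem l2norm_mul_of_homogeneous {k n : ℕ} {p : MonoidAlgebra ℂ (FreeMonoid (Fin k))}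
    (hp : ∀ x ∈ p.coeff.support, x.length = n) (q : MonoidAlgebra ℂ (FreeMonoid (Fin k))) :
    l2norm (p * q) = l2norm p * l2norm q := by
  classical
  unfold l2norm
  rw [← Real.sqrt_mul (by positivity)]
  congr 1
  calc ∑ x ∈ (p * q).coeff.support, ‖(p * q).coeff x‖ ^ 2
      = ∑ x ∈ p.coeff.support * q.coeff.support, ‖(p * q).coeff x‖ ^ 2 :=
        Finset.sum_subset (MonoidAlgebra.support_coeff_mul_subset p q) fun x _ hx ↦ by
          rw [Finsupp.notMem_support_iff.mp hx, norm_zero, zero_pow two_ne_zero]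
    _ = ∑ z ∈ p.coeff.support ×ˢ q.coeff.support, ‖(p * q).coeff (z.1 * z.2)‖ ^ 2 := by
        rw [← Finset.image_mul_product,
          Finset.sum_image (FreeMonoid.injOn_mul_product_of_length_eq hp)]
    _ = ∑ u ∈ p.coeff.support, ∑ v ∈ q.coeff.support, ‖p.coeff u‖ ^ 2 * ‖q.coeff v‖ ^ 2 := by
        rw [Finset.sum_product]
        refine Finset.sum_congr rfl fun u hu ↦ Finset.sum_congr rfl fun v _ ↦ ?_
        rw [MonoidAlgebra.coeff_mul_mul_of_length_eq hp q (hp u hu), norm_mul, mul_pow]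
    _ = (∑ u ∈ p.coeff.support, ‖p.coeff u‖ ^ 2) * ∑ v ∈ q.coeff.support, ‖q.coeff v‖ ^ 2 :=
        (Finset.sum_mul_sum _ _ _ _).symm

/-- `‖p‖_{A(k)}`, computed on the dense subspace of finitely supported vectors of `ℓ²`. -/
noncomputable def leftRegularNorm {k : ℕ} (p : MonoidAlgebra ℂ (FreeMonoid (Fin k))) : ℝ :=
  sSup {r : ℝ | ∃ q : MonoidAlgebra ℂ (FreeMonoid (Fin k)), l2norm q ≤ 1 ∧ r = l2norm (p * q)}

theorem leftRegularNorm_eq_l2norm_of_homogeneous {k n : ℕ}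
    {p : MonoidAlgebra ℂ (FreeMonoid (Fin k))} (hp : ∀ x ∈ p.coeff.support, x.length = n) :
    leftRegularNorm p = l2norm p := by
  refine IsGreatest.csSup_eq ⟨⟨1, l2norm_one.le, by rw [mul_one]⟩, ?_⟩
  rintro r ⟨q, hq, rfl⟩
  rw [l2norm_mul_of_homogeneous hp]
  exact mul_le_of_le_one_right (Real.sqrt_nonneg _) hq

theorem popescu_homogeneous_general {k n : ℕ} {H : Type*} [NormedAddCommGroup H]
    [InnerProductSpace ℂ H] [CompleteSpace H]
    (T : Fin k → H →L[ℂ] H)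
    (p : MonoidAlgebra ℂ (FreeMonoid (Fin k)))
    (hp : ∀ x ∈ p.coeff.support, x.length = n)
    (hPop : ‖evalAt p T‖ ≤ sSup {r : ℝ | ∃ q : MonoidAlgebra ℂ (FreeMonoid (Fin k)),
      l2norm q ≤ 1 ∧ r = l2norm (p * q)}) :
    ‖evalAt p T‖ ≤ l2norm p :=
  hPop.trans (leftRegularNorm_eq_l2norm_of_homogeneous hp).le

/-- Popescu–von Neumann inequality, homogeneous case: if `‖Σᵢ Tᵢ Tᵢ*‖ ≤ 1`, `p` is a
homogeneous polynomial of degree `n`, and Popescu's inequality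
`‖p(T)‖ ≤ ‖p‖_{A(k)}` holds (the right side being the left-regular norm of `p` on the
full Fock space), then `‖p(T)‖ ≤ ‖p‖₂ = (Σ_{|w|=n} |a_w|²)^{1/2}`. -/
theorem popescu_homogeneous {k n : ℕ} {H : Type*} [NormedAddCommGroup H]
    [InnerProductSpace ℂ H] [CompleteSpace H]
    (T : Fin k → H →L[ℂ] H)
    (hT : ‖∑ i, T i * adjoint (T i)‖ ≤ 1)
    (p : MonoidAlgebra ℂ (FreeMonoid (Fin k)))
    (hp : ∀ x ∈ p.coeff.support, x.length = n)
    (hPop : ‖evalAt p T‖ ≤ sSup {r : ℝ | ∃ q : MonoidAlgebra ℂ (FreeMonoid (Fin k)),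
      l2norm q ≤ 1 ∧ r = l2norm (p * q)}) :
    ‖evalAt p T‖ ≤ l2norm p :=
  popescu_homogeneous_general T p hp hPop
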